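/- Let P be the orthogonal projection onto ker(∇ξᵀ) and v a tangent vector at x. Then Σ_{i,i',r,j,r',j'} ∂ᵣP_{ii'}(x) (I−P)_{i'j'}(x) ∂_{r'}P_{j'j}(x) vⱼvᵣ'vᵣvᵢ = Σ_{i',r,j,r'} Σ_{α,η} ∂²_{i'r}ξ_α(x) (∇ξᵀ∇ξ)⁻¹_{αη}(x) ∂²_{jr'}ξ_η(x) vⱼvᵣ'vᵣvᵢ'. -/

import Mathlib

open Matrix

noncomputable def pd {n : ℕ} (r : Fin n) (f : (Fin n → ℝ) → ℝ) (x : Fin n → ℝ) : ℝ :=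
  fderiv ℝ f x (Pi.single r 1)

noncomputable def pd2 {n : ℕ} (r r' : Fin n) (f : (Fin n → ℝ) → ℝ) (x : Fin n → ℝ) : ℝ :=
  pd r (fun y => pd r' f y) x

noncomputable def Jac {n m : ℕ} (ξ : (Fin n → ℝ) → Fin m → ℝ) (x : Fin n → ℝ) :
    Matrix (Fin n) (Fin m) ℝ :=
  Matrix.of fun i α => pd i (fun y => ξ y α) x

noncomputable def Pmat {n m : ℕ} (ξ : (Fin n → ℝ) → Fin m → ℝ) (x : Fin n → ℝ) :
    Matrix (Fin n) (Fin n) ℝ :=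
  1 - Jac ξ x * ((Jac ξ x)ᵀ * Jac ξ x)⁻¹ * (Jac ξ x)ᵀ

section helpers

variable {n : ℕ} {x : Fin n → ℝ}

lemma pd_sum {ι : Type*} (s : Finset ι) (f : ι → (Fin n → ℝ) → ℝ) (r : Fin n)
    (hf : ∀ a ∈ s, DifferentiableAt ℝ (f a) x) :
    pd r (fun y => ∑ a ∈ s, f a y) x = ∑ a ∈ s, pd r (f a) x := by
  unfold pd
  rw [fderiv_fun_sum hf]
  simp

lemma pd_mul {f g : (Fin n → ℝ) → ℝ} (r : Fin n) (hf : DifferentiableAt ℝ f x)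
    (hg : DifferentiableAt ℝ g x) :
    pd r (fun y => f y * g y) x = pd r f x * g x + f x * pd r g x := by
  unfold pd
  rw [fderiv_fun_mul hf hg]
  simp
  ring

lemma pd_const_mul {f : (Fin n → ℝ) → ℝ} (r : Fin n) (c : ℝ) (hf : DifferentiableAt ℝ f x) :
    pd r (fun y => c * f y) x = c * pd r f x := by
  unfold pd
  rw [fderiv_const_mul hf]
  simp

lemma pd_mul_const {f : (Fin n → ℝ) → ℝ} (r : Fin n) (c : ℝ) (hf : DifferentiableAt ℝ f x) :
    pd r (fun y => f y * c) x = pd r f x * c := by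
  have : (fun y => f y * c) = fun y => c * f y := by funext y; ring
  rw [this, pd_const_mul r c hf, mul_comm]

lemma pd_const_sub {f : (Fin n → ℝ) → ℝ} (r : Fin n) (c : ℝ) (hf : DifferentiableAt ℝ f x) :
    pd r (fun y => c - f y) x = -pd r f x := by
  unfold pd
  have : (fun y => c - f y) = fun y => c + (-1 : ℝ) * f y := by funext y; ring
  rw [this, fderiv_const_add, fderiv_const_mul hf]
  simp

lemma pd2_symm {f : (Fin n → ℝ) → ℝ} (hf : ContDiff ℝ 2 f) (r r' : Fin n) :
    pd2 r r' f x = pd2 r' r f x := by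
  have hd : DifferentiableAt ℝ (fderiv ℝ f) x :=
    ((hf.fderiv_right (m := 1) (by norm_num)).differentiable one_ne_zero).differentiableAt
  have hsymm : IsSymmSndFDerivAt ℝ f x := (hf.contDiffAt).isSymmSndFDerivAt (by norm_num)
  have key : ∀ u w : Fin n → ℝ,
      fderiv ℝ (fun y => fderiv ℝ f y w) x u = fderiv ℝ (fderiv ℝ f) x u w := by
    intro u w
    rw [fderiv_clm_apply hd (differentiableAt_const w)]
    simp
  unfold pd2 pd
  rw [key, key, hsymm]

lemma diff_pdJ {f : (Fin n → ℝ) → ℝ} (hf : ContDiff ℝ 2 f) (i : Fin n) :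
    Differentiable ℝ (fun y => pd i f y) := by
  have h2 : ContDiff ℝ 1 (fderiv ℝ f) := hf.fderiv_right (by norm_num)
  exact (h2.clm_apply contDiff_const).differentiable one_ne_zero

variable {k : ℕ}

lemma diffAt_det (M : (Fin n → ℝ) → Matrix (Fin k) (Fin k) ℝ)
    (h : ∀ a b, DifferentiableAt ℝ (fun y => M y a b) x) :
    DifferentiableAt ℝ (fun y => (M y).det) x := by
  simp only [Matrix.det_apply']
  refine DifferentiableAt.fun_sum fun σ _ => ?_
  have hp : DifferentiableAt ℝ (∏ i : Fin k, (fun y => M y (σ i) i) ·) x :=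
    (HasFDerivAt.finset_prod (fun i _ => (h (σ i) i).hasFDerivAt)).differentiableAt
  exact hp.const_mul _

lemma diffAt_adjugate (M : (Fin n → ℝ) → Matrix (Fin k) (Fin k) ℝ)
    (h : ∀ a b, DifferentiableAt ℝ (fun y => M y a b) x) (a b : Fin k) :
    DifferentiableAt ℝ (fun y => (M y).adjugate a b) x := by
  simp only [Matrix.adjugate_apply]
  refine diffAt_det (fun y => (M y).updateRow b (Pi.single a 1)) ?_
  intro c d
  rcases eq_or_ne c b with hc | hc
  · simp only [Matrix.updateRow_apply, hc, if_pos rfl]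
    exact differentiableAt_const _
  · simp only [Matrix.updateRow_apply, if_neg hc]
    exact h c d

lemma diffAt_inv_entry (M : (Fin n → ℝ) → Matrix (Fin k) (Fin k) ℝ)
    (h : ∀ a b, DifferentiableAt ℝ (fun y => M y a b) x)
    (hdet : (M x).det ≠ 0) (a b : Fin k) :
    DifferentiableAt ℝ (fun y => (M y)⁻¹ a b) x := by
  have hfun : (fun y => (M y)⁻¹ a b) = fun y => ((M y).det)⁻¹ * (M y).adjugate a b := by
    funext y
    rw [Matrix.inv_def, Matrix.smul_apply, Ring.inverse_eq_inv', smul_eq_mul]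
  rw [hfun]
  exact ((diffAt_det M h).inv hdet).mul (diffAt_adjugate M h a b)

lemma pullsum {ι κ : Type*} [Fintype ι] [Fintype κ] (v : ι → ℝ) (A : ι → κ → ℝ) (C : κ → ℝ) :
    ∑ i, v i * (∑ q, A i q * C q) = ∑ q, (∑ i, v i * A i q) * C q := by
  simp only [Finset.mul_sum, Finset.sum_mul]
  rw [Finset.sum_comm]
  refine Finset.sum_congr rfl fun q _ => Finset.sum_congr rfl fun i _ => by ring

lemma factor2 {ι κ : Type*} [Fintype ι] [Fintype κ] (a : ι → ℝ) (b : κ → ℝ) (c : ℝ) :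
    ∑ i, ∑ j, a i * b j * c = (∑ i, a i) * (∑ j, b j) * c := by
  have h1 : ∀ i, ∑ j, a i * b j * c = a i * ((∑ j, b j) * c) := by
    intro i
    rw [← Finset.sum_mul, ← Finset.mul_sum, mul_assoc]
  rw [Finset.sum_congr rfl fun i _ => h1 i, ← Finset.sum_mul, mul_assoc]

lemma pullsum2 {ι κ : Type*} [Fintype ι] [Fintype κ] (v : ι → ℝ) (A : κ → ℝ) (Jf : ι → κ → ℝ) :
    ∑ j, (∑ q, A q * Jf j q) * v j = ∑ q, A q * (∑ j, Jf j q * v j) := by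
  simp only [Finset.mul_sum, Finset.sum_mul]
  rw [Finset.sum_comm]
  refine Finset.sum_congr rfl fun q _ => Finset.sum_congr rfl fun i _ => by ring

end helpers

section reorder

variable {A B C D E G : Type*} [Fintype A] [Fintype B] [Fintype C] [Fintype D] [Fintype E]
  [Fintype G] {M : Type*} [AddCommMonoid M]

private lemma swap1 (f : A → B → M) : ∑ a, ∑ b, f a b = ∑ b, ∑ a, f a b := Finset.sum_comm

private lemma swap2 (f : A → B → C → M) : ∑ a, ∑ b, ∑ c, f a b c = ∑ a, ∑ c, ∑ b, f a b c :=
  Finset.sum_congr rfl fun _ _ => Finset.sum_comm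

private lemma swap3 (f : A → B → C → D → M) :
    ∑ a, ∑ b, ∑ c, ∑ d, f a b c d = ∑ a, ∑ b, ∑ d, ∑ c, f a b c d :=
  Finset.sum_congr rfl fun _ _ => swap2 _

private lemma swap4 (f : A → B → C → D → E → M) :
    ∑ a, ∑ b, ∑ c, ∑ d, ∑ e, f a b c d e = ∑ a, ∑ b, ∑ c, ∑ e, ∑ d, f a b c d e :=
  Finset.sum_congr rfl fun _ _ => swap3 _

private lemma swap5 (f : A → B → C → D → E → G → M) :
    ∑ a, ∑ b, ∑ c, ∑ d, ∑ e, ∑ g, f a b c d e g =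
      ∑ a, ∑ b, ∑ c, ∑ d, ∑ g, ∑ e, f a b c d e g :=
  Finset.sum_congr rfl fun _ _ => swap4 _

lemma reorderL (f : A → B → C → D → E → G → M) :
    ∑ a, ∑ b, ∑ c, ∑ d, ∑ e, ∑ g, f a b c d e g =
      ∑ c, ∑ e, ∑ b, ∑ g, ∑ a, ∑ d, f a b c d e g := by
  calc ∑ a, ∑ b, ∑ c, ∑ d, ∑ e, ∑ g, f a b c d e g
      = ∑ a, ∑ c, ∑ b, ∑ d, ∑ e, ∑ g, f a b c d e g := swap2 _
    _ = ∑ c, ∑ a, ∑ b, ∑ d, ∑ e, ∑ g, f a b c d e g := swap1 _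
    _ = ∑ c, ∑ a, ∑ b, ∑ e, ∑ d, ∑ g, f a b c d e g := swap4 _
    _ = ∑ c, ∑ a, ∑ e, ∑ b, ∑ d, ∑ g, f a b c d e g := swap3 _
    _ = ∑ c, ∑ e, ∑ a, ∑ b, ∑ d, ∑ g, f a b c d e g := swap2 _
    _ = ∑ c, ∑ e, ∑ b, ∑ a, ∑ d, ∑ g, f a b c d e g := swap3 _
    _ = ∑ c, ∑ e, ∑ b, ∑ a, ∑ g, ∑ d, f a b c d e g := swap5 _
    _ = ∑ c, ∑ e, ∑ b, ∑ g, ∑ a, ∑ d, f a b c d e g := swap4 _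

lemma reorderR (f : A → B → C → D → E → G → M) :
    ∑ a, ∑ b, ∑ c, ∑ d, ∑ e, ∑ g, f a b c d e g =
      ∑ b, ∑ d, ∑ e, ∑ g, ∑ a, ∑ c, f a b c d e g := by
  calc ∑ a, ∑ b, ∑ c, ∑ d, ∑ e, ∑ g, f a b c d e g
      = ∑ b, ∑ a, ∑ c, ∑ d, ∑ e, ∑ g, f a b c d e g := swap1 _
    _ = ∑ b, ∑ a, ∑ d, ∑ c, ∑ e, ∑ g, f a b c d e g := swap3 _
    _ = ∑ b, ∑ d, ∑ a, ∑ c, ∑ e, ∑ g, f a b c d e g := swap2 _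
    _ = ∑ b, ∑ d, ∑ a, ∑ e, ∑ c, ∑ g, f a b c d e g := swap4 _
    _ = ∑ b, ∑ d, ∑ e, ∑ a, ∑ c, ∑ g, f a b c d e g := swap3 _
    _ = ∑ b, ∑ d, ∑ e, ∑ a, ∑ g, ∑ c, f a b c d e g := swap5 _
    _ = ∑ b, ∑ d, ∑ e, ∑ g, ∑ a, ∑ c, f a b c d e g := swap4 _

end reorder

theorem quartic_contraction_of_projection_derivatives {n m : ℕ}
    (ξ : (Fin n → ℝ) → Fin m → ℝ) (x : Fin n → ℝ)
    (hξ : ContDiff ℝ 2 ξ) (hx : ξ x = 0)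
    (hrank : IsUnit ((Jac ξ x)ᵀ * Jac ξ x).det)
    (v : Fin n → ℝ) (hv : (Jac ξ x)ᵀ.mulVec v = 0) :
    ∑ i, ∑ i', ∑ r, ∑ j, ∑ r', ∑ j',
        pd r (fun y => Pmat ξ y i i') x * (1 - Pmat ξ x) i' j' *
          pd r' (fun y => Pmat ξ y j' j) x * v j * v r' * v r * v i =
      ∑ i', ∑ r, ∑ j, ∑ r', ∑ α, ∑ η,
        pd2 i' r (fun y => ξ y α) x * ((Jac ξ x)ᵀ * Jac ξ x)⁻¹ α η *
          pd2 j r' (fun y => ξ y η) x * v j * v r' * v r * v i' := by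
  classical
  -- notation
  have hξα : ∀ α : Fin m, ContDiff ℝ 2 (fun y => ξ y α) := fun α => contDiff_pi.1 hξ α
  -- basic differentiability facts
  have hJd : ∀ (i : Fin n) (α : Fin m), Differentiable ℝ (fun y => Jac ξ y i α) := by
    intro i α
    exact diff_pdJ (hξα α) i
  have hGd : ∀ a b : Fin m,
      DifferentiableAt ℝ (fun y => ((Jac ξ y)ᵀ * Jac ξ y) a b) x := by
    intro a b
    have : (fun y => ((Jac ξ y)ᵀ * Jac ξ y) a b)
        = fun y => ∑ i, Jac ξ y i a * Jac ξ y i b := by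
      funext y
      simp [Matrix.mul_apply, Matrix.transpose_apply]
    rw [this]
    exact DifferentiableAt.fun_sum fun i _ => ((hJd i a) x).mul ((hJd i b) x)
  have hdet : ((Jac ξ x)ᵀ * Jac ξ x).det ≠ 0 := hrank.ne_zero
  have hGinvd : ∀ a b : Fin m,
      DifferentiableAt ℝ (fun y => ((Jac ξ y)ᵀ * Jac ξ y)⁻¹ a b) x :=
    diffAt_inv_entry (fun y => (Jac ξ y)ᵀ * Jac ξ y) hGd hdet
  -- vanishing contractions
  have hvJ : ∀ α : Fin m, ∑ i, v i * Jac ξ x i α = 0 := by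
    intro α
    have := congrFun hv α
    simpa [Matrix.mulVec, dotProduct, Matrix.transpose_apply, mul_comm] using this
  have hvJ' : ∀ α : Fin m, ∑ i, Jac ξ x i α * v i = 0 := by
    intro α
    rw [← hvJ α]
    exact Finset.sum_congr rfl fun i _ => mul_comm _ _
  -- entrywise formula for Pmat
  have hPentry : ∀ (y : Fin n → ℝ) (i i' : Fin n),
      Pmat ξ y i i' = (1 : Matrix (Fin n) (Fin n) ℝ) i i' -
        ∑ η, (∑ α, Jac ξ y i α * ((Jac ξ y)ᵀ * Jac ξ y)⁻¹ α η) * Jac ξ y i' η := by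
    intro y i i'
    simp [Pmat, Matrix.sub_apply, Matrix.mul_apply, Matrix.transpose_apply]
  -- second derivative contraction
  set B : Fin n → Fin m → ℝ := fun r α => ∑ i, v i * pd2 r i (fun y => ξ y α) x with hB
  set B2 : Fin n → Fin m → ℝ := fun r' η => ∑ j, pd2 r' j (fun y => ξ y η) x * v j with hB2
  -- key contraction identities
  have key1 : ∀ (r i' : Fin n),
      ∑ i, v i * pd r (fun y => Pmat ξ y i i') x =
        -∑ η, (∑ α, B r α * ((Jac ξ x)ᵀ * Jac ξ x)⁻¹ α η) * Jac ξ x i' η := by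
    intro r i'
    have hFun : (fun y => ∑ i, v i * Pmat ξ y i i') =
        fun y => (∑ i, v i * (1 : Matrix (Fin n) (Fin n) ℝ) i i') -
          ∑ η, (∑ α, (∑ i, v i * Jac ξ y i α) * ((Jac ξ y)ᵀ * Jac ξ y)⁻¹ α η) *
            Jac ξ y i' η := by
      funext y
      calc ∑ i, v i * Pmat ξ y i i'
          = ∑ i, (v i * (1 : Matrix (Fin n) (Fin n) ℝ) i i' -
              v i * ∑ η, (∑ α, Jac ξ y i α * ((Jac ξ y)ᵀ * Jac ξ y)⁻¹ α η) * Jac ξ y i' η) := by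
            refine Finset.sum_congr rfl fun i _ => ?_
            rw [hPentry y i i', mul_sub]
        _ = (∑ i, v i * (1 : Matrix (Fin n) (Fin n) ℝ) i i') -
              ∑ i, v i * ∑ η, (∑ α, Jac ξ y i α * ((Jac ξ y)ᵀ * Jac ξ y)⁻¹ α η) * Jac ξ y i' η :=
            Finset.sum_sub_distrib _ _
        _ = (∑ i, v i * (1 : Matrix (Fin n) (Fin n) ℝ) i i') -
              ∑ η, (∑ i, v i * ∑ α, Jac ξ y i α * ((Jac ξ y)ᵀ * Jac ξ y)⁻¹ α η) * Jac ξ y i' η := by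
            rw [pullsum]
        _ = _ := by
            congr 1
            refine Finset.sum_congr rfl fun η _ => ?_
            congr 1
            rw [pullsum v (fun i α => Jac ξ y i α) (fun α => ((Jac ξ y)ᵀ * Jac ξ y)⁻¹ α η)]
    -- differentiability of c α
    have hcd : ∀ α : Fin m, DifferentiableAt ℝ (fun y => ∑ i, v i * Jac ξ y i α) x :=
      fun α => DifferentiableAt.fun_sum fun i _ => ((hJd i α) x).const_mul (v i)
    have hterm : ∀ η : Fin m, DifferentiableAt ℝ
        (fun y => (∑ α, (∑ i, v i * Jac ξ y i α) * ((Jac ξ y)ᵀ * Jac ξ y)⁻¹ α η) *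
          Jac ξ y i' η) x := by
      intro η
      exact (DifferentiableAt.fun_sum fun α _ => (hcd α).mul (hGinvd α η)).mul ((hJd i' η) x)
    have step1 : ∑ i, v i * pd r (fun y => Pmat ξ y i i') x =
        pd r (fun y => ∑ i, v i * Pmat ξ y i i') x := by
      rw [pd_sum Finset.univ (fun i y => v i * Pmat ξ y i i') r]
      · refine Finset.sum_congr rfl fun i _ => ?_
        rw [pd_const_mul]
        have : DifferentiableAt ℝ (fun y => ∑ η,
            (∑ α, Jac ξ y i α * ((Jac ξ y)ᵀ * Jac ξ y)⁻¹ α η) * Jac ξ y i' η) x := by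
          refine DifferentiableAt.fun_sum fun η _ => ?_
          exact (DifferentiableAt.fun_sum fun α _ => ((hJd i α) x).mul (hGinvd α η)).mul
            ((hJd i' η) x)
        have heq : (fun y => Pmat ξ y i i') = fun y => (1 : Matrix (Fin n) (Fin n) ℝ) i i' -
            ∑ η, (∑ α, Jac ξ y i α * ((Jac ξ y)ᵀ * Jac ξ y)⁻¹ α η) * Jac ξ y i' η :=
          funext fun y => hPentry y i i'
        rw [heq]
        exact (differentiableAt_const _).sub this
      · intro i _
        have : DifferentiableAt ℝ (fun y => ∑ η,
            (∑ α, Jac ξ y i α * ((Jac ξ y)ᵀ * Jac ξ y)⁻¹ α η) * Jac ξ y i' η) x := by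
          refine DifferentiableAt.fun_sum fun η _ => ?_
          exact (DifferentiableAt.fun_sum fun α _ => ((hJd i α) x).mul (hGinvd α η)).mul
            ((hJd i' η) x)
        have heq : (fun y => v i * Pmat ξ y i i') = fun y => v i *
            ((1 : Matrix (Fin n) (Fin n) ℝ) i i' -
            ∑ η, (∑ α, Jac ξ y i α * ((Jac ξ y)ᵀ * Jac ξ y)⁻¹ α η) * Jac ξ y i' η) :=
          funext fun y => by rw [hPentry y i i']
        rw [heq]
        exact ((differentiableAt_const _).sub this).const_mul _
    rw [step1, hFun, pd_const_sub _ _ (DifferentiableAt.fun_sum fun η _ => hterm η),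
      pd_sum Finset.univ _ r fun η _ => hterm η]
    congr 1
    refine Finset.sum_congr rfl fun η _ => ?_
    rw [pd_mul r (DifferentiableAt.fun_sum fun α _ => (hcd α).fun_mul (hGinvd α η)) ((hJd i' η) x),
      pd_sum Finset.univ _ r fun α _ => (hcd α).fun_mul (hGinvd α η)]
    have hc0 : ∀ α : Fin m, (∑ i, v i * Jac ξ x i α) = 0 := hvJ
    have hsum0 : (∑ α, (∑ i, v i * Jac ξ x i α) * ((Jac ξ x)ᵀ * Jac ξ x)⁻¹ α η) = 0 := by
      refine Finset.sum_eq_zero fun α _ => ?_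
      rw [hc0 α, zero_mul]
    have : ∀ α : Fin m, pd r (fun y => (∑ i, v i * Jac ξ y i α) *
        ((Jac ξ y)ᵀ * Jac ξ y)⁻¹ α η) x = B r α * ((Jac ξ x)ᵀ * Jac ξ x)⁻¹ α η := by
      intro α
      rw [pd_mul r (hcd α) (hGinvd α η)]
      have h1 : pd r (fun y => ∑ i, v i * Jac ξ y i α) x = B r α := by
        rw [pd_sum Finset.univ _ r fun i _ => ((hJd i α) x).const_mul (v i)]
        refine Finset.sum_congr rfl fun i _ => ?_
        rw [pd_const_mul r (v i) ((hJd i α) x)]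
        rfl
      rw [h1, hc0 α, zero_mul, add_zero]
    rw [Finset.sum_congr rfl fun α _ => this α, hsum0, zero_mul, add_zero]
  have key2 : ∀ (r' j' : Fin n),
      ∑ j, pd r' (fun y => Pmat ξ y j' j) x * v j =
        -∑ η, (∑ α, Jac ξ x j' α * ((Jac ξ x)ᵀ * Jac ξ x)⁻¹ α η) * B2 r' η := by
    intro r' j'
    have hc2d : ∀ η : Fin m, DifferentiableAt ℝ (fun y => ∑ j, Jac ξ y j η * v j) x :=
      fun η => DifferentiableAt.fun_sum fun j _ => ((hJd j η) x).mul_const (v j)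
    have hA2d : ∀ η : Fin m, DifferentiableAt ℝ
        (fun y => ∑ α, Jac ξ y j' α * ((Jac ξ y)ᵀ * Jac ξ y)⁻¹ α η) x :=
      fun η => DifferentiableAt.fun_sum fun α _ => ((hJd j' α) x).mul (hGinvd α η)
    have hterm2 : ∀ η : Fin m, DifferentiableAt ℝ
        (fun y => (∑ α, Jac ξ y j' α * ((Jac ξ y)ᵀ * Jac ξ y)⁻¹ α η) *
          (∑ j, Jac ξ y j η * v j)) x := fun η => (hA2d η).mul (hc2d η)
    have hFun2 : (fun y => ∑ j, Pmat ξ y j' j * v j) =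
        fun y => (∑ j, (1 : Matrix (Fin n) (Fin n) ℝ) j' j * v j) -
          ∑ η, (∑ α, Jac ξ y j' α * ((Jac ξ y)ᵀ * Jac ξ y)⁻¹ α η) *
            (∑ j, Jac ξ y j η * v j) := by
      funext y
      calc ∑ j, Pmat ξ y j' j * v j
          = ∑ j, ((1 : Matrix (Fin n) (Fin n) ℝ) j' j * v j -
              (∑ η, (∑ α, Jac ξ y j' α * ((Jac ξ y)ᵀ * Jac ξ y)⁻¹ α η) * Jac ξ y j η) * v j) := by
            refine Finset.sum_congr rfl fun j _ => ?_
            rw [hPentry y j' j, sub_mul]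
        _ = (∑ j, (1 : Matrix (Fin n) (Fin n) ℝ) j' j * v j) -
              ∑ j, (∑ η, (∑ α, Jac ξ y j' α * ((Jac ξ y)ᵀ * Jac ξ y)⁻¹ α η) * Jac ξ y j η) * v j :=
            Finset.sum_sub_distrib _ _
        _ = _ := by
            congr 1
            rw [pullsum2 v (fun η => ∑ α, Jac ξ y j' α * ((Jac ξ y)ᵀ * Jac ξ y)⁻¹ α η)
              (fun j η => Jac ξ y j η)]
    have step1 : ∑ j, pd r' (fun y => Pmat ξ y j' j) x * v j =
        pd r' (fun y => ∑ j, Pmat ξ y j' j * v j) x := by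
      have hPd : ∀ j : Fin n, DifferentiableAt ℝ (fun y => Pmat ξ y j' j) x := by
        intro j
        have : DifferentiableAt ℝ (fun y => ∑ η,
            (∑ α, Jac ξ y j' α * ((Jac ξ y)ᵀ * Jac ξ y)⁻¹ α η) * Jac ξ y j η) x :=
          DifferentiableAt.fun_sum fun η _ => (hA2d η).mul ((hJd j η) x)
        have heq : (fun y => Pmat ξ y j' j) = fun y => (1 : Matrix (Fin n) (Fin n) ℝ) j' j -
            ∑ η, (∑ α, Jac ξ y j' α * ((Jac ξ y)ᵀ * Jac ξ y)⁻¹ α η) * Jac ξ y j η :=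
          funext fun y => hPentry y j' j
        rw [heq]
        exact (differentiableAt_const _).sub this
      rw [pd_sum Finset.univ (fun j y => Pmat ξ y j' j * v j) r'
        (fun j _ => (hPd j).mul_const (v j))]
      refine Finset.sum_congr rfl fun j _ => ?_
      rw [pd_mul_const r' (v j) (hPd j)]
    rw [step1, hFun2, pd_const_sub _ _ (DifferentiableAt.fun_sum fun η _ => hterm2 η),
      pd_sum Finset.univ _ r' fun η _ => hterm2 η]
    congr 1
    refine Finset.sum_congr rfl fun η _ => ?_
    rw [pd_mul r' (hA2d η) (hc2d η)]
    have hc20 : (∑ j, Jac ξ x j η * v j) = 0 := hvJ' η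
    have hpdc2 : pd r' (fun y => ∑ j, Jac ξ y j η * v j) x = B2 r' η := by
      rw [pd_sum Finset.univ _ r' fun j _ => ((hJd j η) x).mul_const (v j)]
      refine Finset.sum_congr rfl fun j _ => ?_
      rw [pd_mul_const r' (v j) ((hJd j η) x)]
      rfl
    rw [hc20, mul_zero, zero_add, hpdc2]
  -- matrix algebra facts
  have hQ : (1 : Matrix (Fin n) (Fin n) ℝ) - Pmat ξ x
      = Jac ξ x * ((Jac ξ x)ᵀ * Jac ξ x)⁻¹ * (Jac ξ x)ᵀ := by
    unfold Pmat
    exact sub_sub_cancel _ _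
  have hGiG : ((Jac ξ x)ᵀ * Jac ξ x)⁻¹ * ((Jac ξ x)ᵀ * Jac ξ x) = 1 :=
    Matrix.nonsing_inv_mul _ hrank
  have hGGi : ((Jac ξ x)ᵀ * Jac ξ x) * ((Jac ξ x)ᵀ * Jac ξ x)⁻¹ = 1 :=
    Matrix.mul_nonsing_inv _ hrank
  -- reorder both sides
  rw [reorderL (fun i i' r j r' j' =>
      pd r (fun y => Pmat ξ y i i') x * (1 - Pmat ξ x) i' j' *
        pd r' (fun y => Pmat ξ y j' j) x * v j * v r' * v r * v i),
    reorderR (fun i' r j r' α η =>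
      pd2 i' r (fun y => ξ y α) x * ((Jac ξ x)ᵀ * Jac ξ x)⁻¹ α η *
        pd2 j r' (fun y => ξ y η) x * v j * v r' * v r * v i')]
  refine Finset.sum_congr rfl fun r _ => Finset.sum_congr rfl fun r' _ => ?_
  -- right-hand side per (r, r')
  have hRHS : ∑ α, ∑ η, ∑ i', ∑ j,
      pd2 i' r (fun y => ξ y α) x * ((Jac ξ x)ᵀ * Jac ξ x)⁻¹ α η *
        pd2 j r' (fun y => ξ y η) x * v j * v r' * v r * v i'
      = ∑ α, ∑ η, (B r α * B2 r' η) *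
          (((Jac ξ x)ᵀ * Jac ξ x)⁻¹ α η * (v r' * v r)) := by
    refine Finset.sum_congr rfl fun α _ => Finset.sum_congr rfl fun η _ => ?_
    calc ∑ i', ∑ j, pd2 i' r (fun y => ξ y α) x * ((Jac ξ x)ᵀ * Jac ξ x)⁻¹ α η *
          pd2 j r' (fun y => ξ y η) x * v j * v r' * v r * v i'
        = ∑ i', ∑ j, (v i' * pd2 r i' (fun y => ξ y α) x) *
            (pd2 r' j (fun y => ξ y η) x * v j) *
            (((Jac ξ x)ᵀ * Jac ξ x)⁻¹ α η * (v r' * v r)) := by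
          refine Finset.sum_congr rfl fun i' _ => Finset.sum_congr rfl fun j _ => ?_
          rw [pd2_symm (hξα α) i' r, pd2_symm (hξα η) j r']
          ring
      _ = (∑ i', v i' * pd2 r i' (fun y => ξ y α) x) *
            (∑ j, pd2 r' j (fun y => ξ y η) x * v j) *
            (((Jac ξ x)ᵀ * Jac ξ x)⁻¹ α η * (v r' * v r)) := factor2 _ _ _
      _ = (B r α * B2 r' η) * (((Jac ξ x)ᵀ * Jac ξ x)⁻¹ α η * (v r' * v r)) := rfl
  rw [hRHS]
  -- left-hand side per (r, r')
  have hLHS : ∑ i', ∑ j', ∑ i, ∑ j,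
      pd r (fun y => Pmat ξ y i i') x * (1 - Pmat ξ x) i' j' *
        pd r' (fun y => Pmat ξ y j' j) x * v j * v r' * v r * v i
      = ∑ i', ∑ j',
          ((∑ η, (∑ α, B r α * ((Jac ξ x)ᵀ * Jac ξ x)⁻¹ α η) * Jac ξ x i' η) *
            (∑ η, (∑ α, Jac ξ x j' α * ((Jac ξ x)ᵀ * Jac ξ x)⁻¹ α η) * B2 r' η)) *
          ((1 - Pmat ξ x) i' j' * (v r' * v r)) := by
    refine Finset.sum_congr rfl fun i' _ => Finset.sum_congr rfl fun j' _ => ?_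
    calc ∑ i, ∑ j, pd r (fun y => Pmat ξ y i i') x * (1 - Pmat ξ x) i' j' *
          pd r' (fun y => Pmat ξ y j' j) x * v j * v r' * v r * v i
        = ∑ i, ∑ j, (v i * pd r (fun y => Pmat ξ y i i') x) *
            (pd r' (fun y => Pmat ξ y j' j) x * v j) *
            ((1 - Pmat ξ x) i' j' * (v r' * v r)) := by
          refine Finset.sum_congr rfl fun i _ => Finset.sum_congr rfl fun j _ => ?_
          ring
      _ = (∑ i, v i * pd r (fun y => Pmat ξ y i i') x) *
            (∑ j, pd r' (fun y => Pmat ξ y j' j) x * v j) *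
            ((1 - Pmat ξ x) i' j' * (v r' * v r)) := factor2 _ _ _
      _ = _ := by
          rw [key1 r i', key2 r' j', neg_mul_neg]
  rw [hLHS]
  -- factor out the scalar (v r' * v r) on both sides
  have hfacL : ∀ (c : ℝ) (t : Fin n → Fin n → ℝ) (q : Matrix (Fin n) (Fin n) ℝ),
      ∑ i', ∑ j', t i' j' * (q i' j' * c) = (∑ i', ∑ j', t i' j' * q i' j') * c := by
    intro c t q
    rw [Finset.sum_mul]
    refine Finset.sum_congr rfl fun i' _ => ?_
    rw [Finset.sum_mul]
    refine Finset.sum_congr rfl fun j' _ => ?_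
    ring
  have hfacR : ∀ (c : ℝ) (t : Fin m → Fin m → ℝ) (q : Matrix (Fin m) (Fin m) ℝ),
      ∑ α, ∑ η, t α η * (q α η * c) = (∑ α, ∑ η, t α η * q α η) * c := by
    intro c t q
    rw [Finset.sum_mul]
    refine Finset.sum_congr rfl fun α _ => ?_
    rw [Finset.sum_mul]
    refine Finset.sum_congr rfl fun η _ => ?_
    ring
  rw [hfacL (v r' * v r)
      (fun i' j' => (∑ η, (∑ α, B r α * ((Jac ξ x)ᵀ * Jac ξ x)⁻¹ α η) * Jac ξ x i' η) *
        (∑ η, (∑ α, Jac ξ x j' α * ((Jac ξ x)ᵀ * Jac ξ x)⁻¹ α η) * B2 r' η))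
      (1 - Pmat ξ x),
    hfacR (v r' * v r) (fun α η => B r α * B2 r' η) (((Jac ξ x)ᵀ * Jac ξ x)⁻¹)]
  congr 1
  -- the core contraction identity
  have ha : (fun i' => ∑ η, (∑ α, B r α * ((Jac ξ x)ᵀ * Jac ξ x)⁻¹ α η) * Jac ξ x i' η)
      = Jac ξ x *ᵥ (B r ᵥ* ((Jac ξ x)ᵀ * Jac ξ x)⁻¹) := by
    funext i'
    simp only [Matrix.mulVec, Matrix.vecMul, dotProduct]
    refine Finset.sum_congr rfl fun η _ => mul_comm _ _
  have hb : (fun j' => ∑ η, (∑ α, Jac ξ x j' α * ((Jac ξ x)ᵀ * Jac ξ x)⁻¹ α η) * B2 r' η)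
      = (Jac ξ x * ((Jac ξ x)ᵀ * Jac ξ x)⁻¹) *ᵥ B2 r' := by
    funext j'
    simp only [Matrix.mulVec, dotProduct, Matrix.mul_apply]
  calc ∑ i', ∑ j',
        (∑ η, (∑ α, B r α * ((Jac ξ x)ᵀ * Jac ξ x)⁻¹ α η) * Jac ξ x i' η) *
          (∑ η, (∑ α, Jac ξ x j' α * ((Jac ξ x)ᵀ * Jac ξ x)⁻¹ α η) * B2 r' η) *
          (1 - Pmat ξ x) i' j'
      = ∑ i', (Jac ξ x *ᵥ (B r ᵥ* ((Jac ξ x)ᵀ * Jac ξ x)⁻¹)) i' *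
          ((1 - Pmat ξ x) *ᵥ ((Jac ξ x * ((Jac ξ x)ᵀ * Jac ξ x)⁻¹) *ᵥ B2 r')) i' := by
        refine Finset.sum_congr rfl fun i' _ => ?_
        rw [← ha, ← hb]
        simp only [Matrix.mulVec, dotProduct]
        rw [Finset.mul_sum]
        refine Finset.sum_congr rfl fun j' _ => ?_
        ring
    _ = (Jac ξ x *ᵥ (B r ᵥ* ((Jac ξ x)ᵀ * Jac ξ x)⁻¹)) ⬝ᵥ
          ((1 - Pmat ξ x) *ᵥ ((Jac ξ x * ((Jac ξ x)ᵀ * Jac ξ x)⁻¹) *ᵥ B2 r')) := rfl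
    _ = (B r ᵥ* ((Jac ξ x)ᵀ * Jac ξ x)⁻¹) ⬝ᵥ B2 r' := by
        rw [hQ, Matrix.mulVec_mulVec]
        have hmid : Jac ξ x * ((Jac ξ x)ᵀ * Jac ξ x)⁻¹ * (Jac ξ x)ᵀ *
            (Jac ξ x * ((Jac ξ x)ᵀ * Jac ξ x)⁻¹)
            = Jac ξ x * ((Jac ξ x)ᵀ * Jac ξ x)⁻¹ := by
          calc Jac ξ x * ((Jac ξ x)ᵀ * Jac ξ x)⁻¹ * (Jac ξ x)ᵀ *
              (Jac ξ x * ((Jac ξ x)ᵀ * Jac ξ x)⁻¹)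
              = Jac ξ x * ((Jac ξ x)ᵀ * Jac ξ x)⁻¹ *
                ((Jac ξ x)ᵀ * (Jac ξ x * ((Jac ξ x)ᵀ * Jac ξ x)⁻¹)) := by
                rw [Matrix.mul_assoc]
            _ = Jac ξ x * ((Jac ξ x)ᵀ * Jac ξ x)⁻¹ *
                ((Jac ξ x)ᵀ * Jac ξ x * ((Jac ξ x)ᵀ * Jac ξ x)⁻¹) := by
                rw [Matrix.mul_assoc ((Jac ξ x)ᵀ) (Jac ξ x) _]
            _ = Jac ξ x * ((Jac ξ x)ᵀ * Jac ξ x)⁻¹ := by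
                rw [hGGi, Matrix.mul_one]
        rw [hmid, ← Matrix.vecMul_transpose, dotProduct_mulVec,
          Matrix.vecMul_vecMul]
        have hone : (Jac ξ x)ᵀ * (Jac ξ x * ((Jac ξ x)ᵀ * Jac ξ x)⁻¹) = 1 := by
          rw [← Matrix.mul_assoc, hGGi]
        rw [hone, Matrix.vecMul_one]
    _ = ∑ α, ∑ η, B r α * B2 r' η * ((Jac ξ x)ᵀ * Jac ξ x)⁻¹ α η := by
        simp only [dotProduct, Matrix.vecMul]
        simp only [Finset.sum_mul]
        rw [Finset.sum_comm]
        refine Finset.sum_congr rfl fun α _ => Finset.sum_congr rfl fun η _ => ?_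
        ring
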